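/- arXiv:2105.00980 — 3 statements merged into one kernel-verified Lean document; each statement's English description precedes it below -/
import Mathlib

section
/- If L is a multiset of size v-1 with underlying set contained in {1,...,⌊v/2⌋} and L has a realization (i.e., there is a Hamiltonian path of K_v whose multiset of edge lengths equals L), then for every divisor d of v, the number of elements of L that are multiples of d is at most v-d. -/
/-!
Since `d ∣ v`, an edge has length divisible by `d` exactly when its endpoints are congruent
modulo `d`. A Hamiltonian path meets all `d` residue classes, so at least `d - 1` of its
`v - 1` edges join different classes, and at most `v - d` edges are left.
-/

/-- The cyclic edge length between vertices `a` and `b` in `K_v`. -/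
def ell (v a b : ℕ) : ℕ := min (Nat.dist a b) (v - Nat.dist a b)

/-- The multiset of edge lengths of a path `h` in `K_v`. -/
def edgeLengths (v : ℕ) (h : List ℕ) : Multiset ℕ :=
  ↑(List.zipWith (ell v) h h.tail)

/-- `h` is a Hamiltonian path on the vertex set `{0, ..., v-1}` of `K_v`:
it is a list using each of `0, ..., v-1` exactly once. -/
def IsHamPath (v : ℕ) (h : List ℕ) : Prop := h.Perm (List.range v)

theorem Nat.dvd_dist_iff_mod_eq (d a b : ℕ) : d ∣ Nat.dist a b ↔ a % d = b % d := by
  rcases le_total a b with hab | hba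
  · rw [Nat.dist_eq_sub_of_le hab, ← Nat.modEq_iff_dvd' hab]; rfl
  · rw [Nat.dist_eq_sub_of_le_right hba, ← Nat.modEq_iff_dvd' hba]; exact eq_comm

theorem dvd_ell_iff_mod_eq {v d a b : ℕ} (hd : d ∣ v) (ha : a < v) (hb : b < v) :
    d ∣ ell v a b ↔ a % d = b % d := by
  rw [← Nat.dvd_dist_iff_mod_eq]
  have hdist : Nat.dist a b ≤ v := by unfold Nat.dist; omega
  exact min_rec (p := fun n => d ∣ n ↔ d ∣ Nat.dist a b) (fun _ => Iff.rfl)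
    (fun _ => Nat.dvd_sub_iff_right hdist hd)

theorem card_filter_dvd_edgeLengths {v d : ℕ} {h : List ℕ} (hd : d ∣ v) (hlt : ∀ x ∈ h, x < v) :
    Multiset.card ((edgeLengths v h).filter (fun l => d ∣ l)) =
      (h.zip h.tail).countP (fun p => p.1 % d = p.2 % d) := by
  rw [edgeLengths, ← List.map_uncurry_zip_eq_zipWith, Multiset.filter_coe,
    Multiset.coe_card, ← List.countP_eq_length_filter, List.countP_map]
  refine List.countP_congr fun p hp => ?_
  obtain ⟨h₁, h₂⟩ := List.of_mem_zip hp
  simp only [Function.comp_apply, Function.uncurry, decide_eq_true_eq]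
  exact decide_eq_true_iff.trans
    (dvd_ell_iff_mod_eq hd (hlt _ h₁) (hlt _ (List.mem_of_mem_tail h₂)))

theorem List.countP_zip_tail_add_card_le {α β : Type*} [DecidableEq β] (f : α → β) :
    ∀ l : List α,
      (l.zip l.tail).countP (fun p => f p.1 = f p.2) + (l.map f).toFinset.card ≤ l.length
  | [] => by simp
  | [_] => by simp
  | a :: b :: t => by
    have ih := List.countP_zip_tail_add_card_le f (b :: t)
    have hb : f b ∈ ((b :: t).map f).toFinset := by simp
    simp only [List.tail_cons, List.zip_cons_cons, List.countP_cons, List.map_cons,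
      List.toFinset_cons, List.length_cons, decide_eq_true_eq] at ih hb ⊢
    by_cases hab : f a = f b
    · rw [if_pos hab, hab, Finset.card_insert_of_mem hb]
      omega
    · have := Finset.card_insert_le (f a) (insert (f b) (t.map f).toFinset)
      rw [if_neg hab]
      omega

theorem toFinset_map_mod_range {d v : ℕ} (hd : 0 < d) (hdv : d ≤ v) :
    ((List.range v).map (· % d)).toFinset = Finset.range d := by
  ext r
  simp only [List.mem_toFinset, List.mem_map, List.mem_range, Finset.mem_range]
  refine ⟨fun ⟨x, _, hx⟩ => hx ▸ Nat.mod_lt x hd, fun hr => ⟨r, by omega, Nat.mod_eq_of_lt hr⟩⟩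

theorem stmt_2_general (v : ℕ) (L : Multiset ℕ)
    (hreal : ∃ h : List ℕ, List.Perm h
      (List.range v) ∧ edgeLengths v h = L) :
    ∀ d, d ∣ v → Multiset.card (L.filter (fun l => d ∣ l)) ≤ v - d := by
  intro d hdv
  obtain ⟨h, hperm, rfl⟩ := hreal
  rcases Nat.eq_zero_or_pos v with rfl | hv
  · simp [List.perm_nil.1 hperm, edgeLengths]
  have hd : 0 < d := Nat.pos_of_dvd_of_pos hdv hv
  have hclasses : (h.map (· % d)).toFinset.card = d := by
    rw [List.toFinset_eq_of_perm _ _ (hperm.map _), toFinset_map_mod_range hd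
      (Nat.le_of_dvd hv hdv), Finset.card_range]
  have hbound := List.countP_zip_tail_add_card_le (· % d) h
  rw [hclasses, hperm.length_eq, List.length_range] at hbound
  rw [card_filter_dvd_edgeLengths hdv fun x hx => List.mem_range.1 (hperm.mem_iff.1 hx)]
  omega

theorem stmt_2 (v : ℕ) (L : Multiset ℕ)
    (hcard : Multiset.card L = v - 1)
    (hU : ∀ l ∈ L, 1 ≤ l ∧ l ≤ v / 2)
    (hreal : ∃ h : List ℕ, List.Perm h
      (List.range v) ∧ edgeLengths v h = L) :
    ∀ d, d ∣ v → Multiset.card (L.filter (fun l => d ∣ l)) ≤ v - d :=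
  stmt_2_general v L hreal
end

section
/- For each even integer x ≥ 4, the sequence [1, x+1, 0, 2x, x, x-1, 2x-1, 2x-2, x-2, x-3, 2x-3, ..., x+2, 2] (alternating pairs of the form (x-1-2j, 2x-1-2j),(2x-2-2j, x-2-2j)) is a Hamiltonian path on {0,1,...,2x} in K_{2x+1} whose multiset of edge lengths is {1^{x-1}, x^{x+1}}, where the length of an edge between u and w is min(|u-w|, (2x+1)-|u-w|). -/
theorem edgeLengths_cons_cons (v a b : ℕ) (l : List ℕ) :
    edgeLengths v (a :: b :: l) = ell v a b ::ₘ edgeLengths v (b :: l) :=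
  rfl

def pathBlock (x j : ℕ) : List ℕ := [x-1-2*j, 2*x-1-2*j, 2*x-2-2*j, x-2-2*j]

theorem edgeLengths_cons_flatMap_pathBlock (x j n : ℕ) (h : 2 * (j + n) ≤ x) :
    edgeLengths (2*x+1) ((x - 2*j) :: (List.range' j n).flatMap (pathBlock x)) =
      Multiset.replicate (2*n) 1 + Multiset.replicate (2*n) x := by
  induction n generalizing j with
  | zero => rfl
  | succ n ih =>
    have hnext : x - 2*(j+1) = x-2-2*j := by omega
    rw [List.range'_succ, List.flatMap_cons, pathBlock, List.cons_append, List.cons_append,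
      List.cons_append, List.cons_append, List.nil_append, ← hnext]
    obtain ⟨e1, e2, e3, e4⟩ : ell (2*x+1) (x-2*j) (x-1-2*j) = 1 ∧
        ell (2*x+1) (x-1-2*j) (2*x-1-2*j) = x ∧ ell (2*x+1) (2*x-1-2*j) (2*x-2-2*j) = 1 ∧
        ell (2*x+1) (2*x-2-2*j) (x-2*(j+1)) = x := by
      simp only [ell, Nat.dist]; omega
    simp only [edgeLengths_cons_cons, ih (j+1) (by omega), e1, e2, e3, e4]
    simp only [mul_add, Multiset.replicate_succ, Multiset.cons_add, Multiset.add_cons, mul_one,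
      Multiset.cons_swap x 1]

theorem edgeLengths_path (x m : ℕ) (hx : 0 < x) (hm : 2 * m ≤ x) :
    edgeLengths (2*x+1) ([1, x+1, 0, 2*x, x] ++ (List.range m).flatMap (pathBlock x)) =
      Multiset.replicate (2*m+1) 1 + Multiset.replicate (2*m+3) x := by
  obtain ⟨e1, e2, e3, e4⟩ : ell (2*x+1) 1 (x+1) = x ∧ ell (2*x+1) (x+1) 0 = x ∧
      ell (2*x+1) 0 (2*x) = 1 ∧ ell (2*x+1) (2*x) (x - 2*0) = x := by
    simp only [ell, Nat.dist]; omega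
  have htail := edgeLengths_cons_flatMap_pathBlock x 0 m (by omega)
  rw [← List.range_eq_range'] at htail
  change edgeLengths _
    (1 :: (x+1) :: 0 :: (2*x) :: (x - 2*0) :: (List.range m).flatMap (pathBlock x)) = _
  simp only [edgeLengths_cons_cons, htail, e1, e2, e3, e4]
  simp only [Multiset.replicate_succ, Multiset.cons_add, Multiset.add_cons, Multiset.cons_swap x 1]

theorem range'_sub_two_mul_succ (a n : ℕ) (h : 2 * (n+1) ≤ a) :
    List.range' (a - 2*(n+1)) (2*(n+1)) =
      (a-2-2*n) :: (a-1-2*n) :: List.range' (a - 2*n) (2*n) := by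
  rw [mul_add, mul_one, List.range'_succ, List.range'_succ]
  simp only [List.cons.injEq]
  exact ⟨by omega, by omega, by congr 1; omega⟩

theorem flatMap_range_pathBlock_perm (x n : ℕ) (h : 2 * n ≤ x) :
    List.Perm ((List.range n).flatMap (pathBlock x))
      (List.range' (x - 2*n) (2*n) ++ List.range' (2*x - 2*n) (2*n)) := by
  induction n with
  | zero => rfl
  | succ n ih =>
    rw [List.range_succ, List.flatMap_append, List.flatMap_singleton,
      range'_sub_two_mul_succ x n (by omega), range'_sub_two_mul_succ (2*x) n (by omega),
      pathBlock]
    refine (ih (by omega)).append_right _ |>.trans ?_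
    simp only [← Multiset.coe_eq_coe, ← Multiset.coe_add, ← Multiset.cons_coe,
      Multiset.coe_nil, ← Multiset.singleton_add, add_zero]
    abel

theorem path_perm_range (x m : ℕ) (hx : x = 2*m + 2) :
    List.Perm ([1, x+1, 0, 2*x, x] ++ (List.range m).flatMap (pathBlock x))
      (List.range (2*x+1)) := by
  subst hx
  have hF := flatMap_range_pathBlock_perm (2*m+2) m (by omega)
  rw [show 2*m+2 - 2*m = 2 by omega, show 2*(2*m+2) - 2*m = 2*m+4 by omega] at hF
  have hrange : List.range (2*(2*m+2)+1) = [0, 1] ++ List.range' 2 (2*m) ++ [2*m+2, 2*m+2+1] ++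
      List.range' (2*m+4) (2*m) ++ [2*(2*m+2)] := by
    rw [List.range_eq_range', show 2*(2*m+2)+1 = 2 + 2*m + 2 + 2*m + 1 by ring]
    simp only [← List.range'_append_1]
    simp only [List.range'_succ, List.range'_zero]
    ring_nf
  refine (hF.append_left _).trans ?_
  rw [hrange]
  simp only [← Multiset.coe_eq_coe, ← Multiset.coe_add, ← Multiset.cons_coe, Multiset.coe_nil,
    ← Multiset.singleton_add, add_zero]
  abel

theorem stmt_3 (x : ℕ) (hx : 4 ≤ x) (hev : Even x) :
    List.Perm ([1, x+1, 0, 2*x, x] ++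
      (List.range ((x-2)/2)).flatMap (fun j =>
        [x-1-2*j, 2*x-1-2*j, 2*x-2-2*j, x-2-2*j]))
      (List.range (2*x+1)) ∧
    edgeLengths (2*x+1)
      ([1, x+1, 0, 2*x, x] ++
        (List.range ((x-2)/2)).flatMap (fun j =>
          [x-1-2*j, 2*x-1-2*j, 2*x-2-2*j, x-2-2*j])) =
      Multiset.replicate (x-1) 1 + Multiset.replicate (x+1) x := by
  obtain ⟨k, hk⟩ := hev
  have hm : x = 2 * ((x-2)/2) + 2 := by omega
  refine ⟨path_perm_range x _ hm, ?_⟩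
  refine (edgeLengths_path x _ (by omega) (by omega)).trans ?_
  congr 2 <;> omega
end

section
/- For each odd integer x ≥ 5, the sequence [x, x+1, 1, 0, 2x, x-1, 2x-1, x-2, 2x-2, 2x-3, x-3, x-4, 2x-4, ..., x+2, 2] is a Hamiltonian path on {0,...,2x} in K_{2x+1} whose multiset of edge lengths is {1^{x-1}, x^{x+1}}. -/
/-! From vertex `x - 2` on, the path alternates between the descending runs `x - 2, …, 2` and
`2x - 2, …, x + 2` in blocks `c, c + x, c + x - 1, c - 1`, so every edge there has length `x`
(across the runs) or `1` (along a run). The runs miss exactly the seven vertices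
`x, x + 1, 1, 0, 2x, x - 1, 2x - 1` of the prefix, whose edges, together with the one into `x - 2`,
have lengths `1, x, 1, 1, x, x, x`. -/

theorem List.perm_range_of_length_le_of_forall_mem {l : List ℕ} {n : ℕ} (hlen : l.length ≤ n)
    (hmem : ∀ a < n, a ∈ l) : l.Perm (List.range n) :=
  ((List.subperm_of_subset List.nodup_range fun a ha => hmem a (List.mem_range.1 ha))
    |>.perm_of_length_le (by simpa using hlen)).symm

def zigzag (c d : ℕ) : ℕ → List ℕ
  | 0 => []
  | m + 1 => c :: d :: (d - 1) :: (c - 1) :: zigzag (c - 2) (d - 2) m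

theorem flatMap_range_alternating_eq_zigzag (c d m : ℕ) :
    (List.range (2 * m)).flatMap (fun j => if j % 2 = 0 then [c - j, d - j] else [d - j, c - j]) =
      zigzag c d m := by
  induction m generalizing c d with
  | zero => simp [zigzag]
  | succ m ih =>
    rw [show 2 * (m + 1) = 2 + 2 * m by ring, List.range_add, List.flatMap_append,
      List.flatMap_map]
    have shift : ∀ j, (if (2 + j) % 2 = 0 then [c - (2 + j), d - (2 + j)]
        else [d - (2 + j), c - (2 + j)]) =
        if j % 2 = 0 then [c - 2 - j, d - 2 - j] else [d - 2 - j, c - 2 - j] := by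
      intro j
      simp only [Nat.add_mod_left, Nat.sub_sub]
    simp only [shift, ih]
    simp [zigzag, List.range_succ]

theorem length_zigzag (c d m : ℕ) : (zigzag c d m).length = 4 * m := by
  induction m generalizing c d with
  | zero => simp [zigzag]
  | succ m ih => simp [zigzag, ih]; ring

theorem mem_zigzag {a c d m : ℕ} (hc : 2 * m ≤ c) (hd : 2 * m ≤ d) :
    a ∈ zigzag c d m ↔ c < a + 2 * m ∧ a ≤ c ∨ d < a + 2 * m ∧ a ≤ d := by
  induction m generalizing c d with
  | zero => simp [zigzag]
  | succ m ih =>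
    simp only [zigzag, List.mem_cons, ih (c := c - 2) (d := d - 2) (by omega) (by omega)]
    omega

theorem edgeLengths_cons_zigzag (v a c d m : ℕ) :
    edgeLengths v (a :: zigzag c d (m + 1)) = ell v a c ::ₘ edgeLengths v (zigzag c d (m + 1)) :=
  rfl

theorem edgeLengths_zigzag {v x c d m : ℕ} (hx : 0 < x) (hv : 2 * x ≤ v) (hd : d = c + x)
    (hc : 2 * m + 1 ≤ c) :
    edgeLengths v (zigzag c d (m + 1)) =
      Multiset.replicate (2 * m + 1) 1 + Multiset.replicate (2 * m + 2) x := by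
  have across : ∀ c d, d = c + x → 1 ≤ c → ell v c d = x ∧ ell v (d - 1) (c - 1) = x := by
    intro c d hd hc; simp only [ell, Nat.dist]; omega
  have down : ∀ a b, a = b + 1 → ell v a b = 1 := by
    intro a b hab; simp only [ell, Nat.dist]; omega
  induction m generalizing c d with
  | zero =>
    obtain ⟨h₁, h₂⟩ := across c d hd hc
    simp only [zigzag, edgeLengths_cons_cons, h₁, h₂, down d (d - 1) (by omega)]
    rw [show edgeLengths v [c - 1] = 0 from rfl]
    ext a
    simp only [Multiset.count_cons, Multiset.count_zero, Multiset.count_add,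
      Multiset.count_replicate]
    split_ifs <;> omega
  | succ m ih =>
    obtain ⟨h₁, h₂⟩ := across c d hd (by omega)
    simp only [zigzag.eq_2 c, edgeLengths_cons_cons, edgeLengths_cons_zigzag, h₁, h₂,
      down d (d - 1) (by omega), down (c - 1) (c - 2) (by omega),
      ih (c := c - 2) (d := d - 2) (by omega) (by omega)]
    ext a
    simp only [Multiset.count_cons, Multiset.count_add, Multiset.count_replicate]
    split_ifs <;> omega

theorem stmt_4 (x : ℕ) (hx : 5 ≤ x) (hodd : Odd x) :
    List.Perm ([x, x+1, 1, 0, 2*x, x-1, 2*x-1] ++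
      (List.range (x-3)).flatMap (fun j =>
        if j % 2 = 0 then [x-2-j, 2*x-2-j] else [2*x-2-j, x-2-j]))
      (List.range (2*x+1)) ∧
    edgeLengths (2*x+1)
      ([x, x+1, 1, 0, 2*x, x-1, 2*x-1] ++
        (List.range (x-3)).flatMap (fun j =>
          if j % 2 = 0 then [x-2-j, 2*x-2-j] else [2*x-2-j, x-2-j])) =
      Multiset.replicate (x-1) 1 + Multiset.replicate (x+1) x := by
  obtain ⟨k, hk⟩ : ∃ k, x - 3 = 2 * (k + 1) := by
    obtain ⟨r, hr⟩ := hodd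
    exact ⟨r - 2, by omega⟩
  have hpath : [x, x+1, 1, 0, 2*x, x-1, 2*x-1] ++ (List.range (x-3)).flatMap (fun j =>
        if j % 2 = 0 then [x-2-j, 2*x-2-j] else [2*x-2-j, x-2-j]) =
      x :: (x + 1) :: 1 :: 0 :: 2 * x :: (x - 1) :: (2 * x - 1) ::
        zigzag (x - 2) (2 * x - 2) (k + 1) := by
    rw [hk, flatMap_range_alternating_eq_zigzag]
    rfl
  rw [hpath]
  constructor
  · apply List.perm_range_of_length_le_of_forall_mem
    · simp only [List.length_cons, length_zigzag]
      omega
    · intro a ha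
      simp only [List.mem_cons,
        mem_zigzag (c := x - 2) (d := 2 * x - 2) (m := k + 1) (by omega) (by omega)]
      omega
  · obtain ⟨e₁, e₂, e₃, e₄, e₅, e₆, e₇⟩ :
        ell (2*x+1) x (x + 1) = 1 ∧ ell (2*x+1) (x + 1) 1 = x ∧ ell (2*x+1) 1 0 = 1 ∧
        ell (2*x+1) 0 (2 * x) = 1 ∧ ell (2*x+1) (2 * x) (x - 1) = x ∧
        ell (2*x+1) (x - 1) (2 * x - 1) = x ∧ ell (2*x+1) (2 * x - 1) (x - 2) = x := by
      simp only [ell, Nat.dist]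
      omega
    simp only [edgeLengths_cons_cons, edgeLengths_cons_zigzag, e₁, e₂, e₃, e₄, e₅, e₆, e₇,
      edgeLengths_zigzag (v := 2 * x + 1) (x := x) (c := x - 2) (d := 2 * x - 2) (m := k)
        (by omega) (by omega) (by omega) (by omega)]
    ext a
    simp only [Multiset.count_cons, Multiset.count_add, Multiset.count_replicate]
    split_ifs <;> omega
end
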